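/- Let φ, ψ, η : ℝ² → ℝ be smooth functions of (u,w) with η nowhere vanishing, satisfying the integrability conditions, and let s ∈ ℝ. Define φ̃(u,w) := φ(u, w − s u) − s·ψ(u, w − s u) + s²·η(u, w − s u), ψ̃(u,w) := ψ(u, w − s u) − 2s·η(u, w − s u), and η̃(u,w) := η(u, w − s u). Then the triple (φ̃, ψ̃, η̃) also satisfies the integrability conditions, and η̃ is nowhere vanishing. -/

import Mathlib

/-- Partial derivative in the first (u) coordinate of a function on ℝ² = ℝ × ℝ. -/
noncomputable def pu (f : ℝ × ℝ → ℝ) : ℝ × ℝ → ℝ :=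
  fun p => deriv (fun s => f (s, p.2)) p.1

/-- Partial derivative in the second (w) coordinate. -/
noncomputable def pw (f : ℝ × ℝ → ℝ) : ℝ × ℝ → ℝ :=
  fun p => deriv (fun s => f (p.1, s)) p.2

/-- The nine integrability conditions for a triple (φ, ψ, η) of functions of (u, w),
holding at every point of the set `S`. -/
def IntCond (φ ψ η : ℝ × ℝ → ℝ) (S : Set (ℝ × ℝ)) : Prop :=
  ∀ p ∈ S,
    η p * pu (pu φ) p = -((pw φ p) ^ 2 + pu ψ p * pw φ p - 2 * pw ψ p * pu φ p) ∧
    η p * pw (pu φ) p = pw η p * pu φ p ∧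
    η p * pw (pw φ) p = pw η p * pw φ p ∧
    η p * pu (pu ψ) p =
      -(pw φ p) * pw ψ p + pu ψ p * pw ψ p - 2 * pw φ p * pu η p + 2 * pw η p * pu φ p ∧
    η p * pw (pu ψ) p = pw η p * pu ψ p ∧
    η p * pw (pw ψ) p = pw η p * pw ψ p ∧
    η p * pu (pu η) p = -(pw η p) * (pw φ p - pu ψ p) ∧
    η p * pw (pu η) p = pw η p * pu η p ∧
    η p * pw (pw η) p = (pw η p) ^ 2

lemma pu_eq_fderiv {f : ℝ × ℝ → ℝ} (hf : Differentiable ℝ f) (p : ℝ × ℝ) :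
    pu f p = fderiv ℝ f p (1, 0) := by
  have h1 : HasDerivAt (fun t : ℝ => (t, p.2)) ((1 : ℝ), (0 : ℝ)) p.1 :=
    (hasDerivAt_id p.1).prodMk (hasDerivAt_const p.1 p.2)
  have h : HasDerivAt (fun t => f (t, p.2)) (fderiv ℝ f p (1, 0)) p.1 := by
    exact ((hf p).hasFDerivAt.comp_hasDerivAt p.1 h1)
  simp only [pu]
  exact h.deriv

lemma pw_eq_fderiv {f : ℝ × ℝ → ℝ} (hf : Differentiable ℝ f) (p : ℝ × ℝ) :
    pw f p = fderiv ℝ f p (0, 1) := by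
  have h1 : HasDerivAt (fun t : ℝ => (p.1, t)) ((0 : ℝ), (1 : ℝ)) p.2 :=
    (hasDerivAt_const p.2 p.1).prodMk (hasDerivAt_id p.2)
  have h : HasDerivAt (fun t => f (p.1, t)) (fderiv ℝ f p (0, 1)) p.2 := by
    exact ((hf p).hasFDerivAt.comp_hasDerivAt p.2 h1)
  simp only [pw]
  exact h.deriv

lemma sectU_diff {f : ℝ × ℝ → ℝ} (hf : Differentiable ℝ f) (p : ℝ × ℝ) :
    DifferentiableAt ℝ (fun t => f (t, p.2)) p.1 :=
  (hf (p.1, p.2)).comp p.1 (differentiableAt_id.prodMk (differentiableAt_const _))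

lemma sectW_diff {f : ℝ × ℝ → ℝ} (hf : Differentiable ℝ f) (p : ℝ × ℝ) :
    DifferentiableAt ℝ (fun t => f (p.1, t)) p.2 :=
  (hf (p.1, p.2)).comp p.2 ((differentiableAt_const _).prodMk differentiableAt_id)

lemma hasDerivAt_pu {f : ℝ × ℝ → ℝ} (hf : Differentiable ℝ f) (p : ℝ × ℝ) :
    HasDerivAt (fun t => f (t, p.2)) (pu f p) p.1 :=
  (sectU_diff hf p).hasDerivAt

lemma hasDerivAt_pw {f : ℝ × ℝ → ℝ} (hf : Differentiable ℝ f) (p : ℝ × ℝ) :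
    HasDerivAt (fun t => f (p.1, t)) (pw f p) p.2 :=
  (sectW_diff hf p).hasDerivAt

lemma contDiff_pu {f : ℝ × ℝ → ℝ} (hf : ContDiff ℝ (⊤ : ℕ∞) f) : ContDiff ℝ (⊤ : ℕ∞) (pu f) := by
  have : pu f = fun p => fderiv ℝ f p (1, 0) :=
    funext (pu_eq_fderiv (hf.differentiable (by simp)))
  rw [this]
  exact (hf.fderiv_right (by simp)).clm_apply contDiff_const

lemma contDiff_pw {f : ℝ × ℝ → ℝ} (hf : ContDiff ℝ (⊤ : ℕ∞) f) : ContDiff ℝ (⊤ : ℕ∞) (pw f) := by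
  have : pw f = fun p => fderiv ℝ f p (0, 1) :=
    funext (pw_eq_fderiv (hf.differentiable (by simp)))
  rw [this]
  exact (hf.fderiv_right (by simp)).clm_apply contDiff_const

lemma pu_pw_symm {f : ℝ × ℝ → ℝ} (hf : ContDiff ℝ (⊤ : ℕ∞) f) (p : ℝ × ℝ) :
    pu (pw f) p = pw (pu f) p := by
  have hd := hf.differentiable (by simp)
  have hfd : ContDiff ℝ (⊤ : ℕ∞) (fderiv ℝ f) := hf.fderiv_right (by simp)
  have h2 : DifferentiableAt ℝ (fderiv ℝ f) p := (hfd.differentiable (by simp)) p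
  have key : ∀ v w : ℝ × ℝ,
      fderiv ℝ (fun q => fderiv ℝ f q v) p w = fderiv ℝ (fderiv ℝ f) p w v := by
    intro v w
    rw [fderiv_clm_apply h2 (differentiableAt_const v)]
    simp
  have hsymm := second_derivative_symmetric (f := f)
    (fun y => (hd y).hasFDerivAt) h2.hasFDerivAt ((1:ℝ), (0:ℝ)) ((0:ℝ), (1:ℝ))
  have e1 : pw f = fun q => fderiv ℝ f q (0, 1) := funext (pw_eq_fderiv hd)
  have e2 : pu f = fun q => fderiv ℝ f q (1, 0) := funext (pu_eq_fderiv hd)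
  rw [pu_eq_fderiv ((contDiff_pw hf).differentiable (by simp)) p,
      pw_eq_fderiv ((contDiff_pu hf).differentiable (by simp)) p, e1, e2, key, key]
  exact hsymm

lemma pu_comb3 {f g h : ℝ × ℝ → ℝ} (hf : Differentiable ℝ f) (hg : Differentiable ℝ g)
    (hh : Differentiable ℝ h) (a b : ℝ) (p : ℝ × ℝ) :
    pu (fun q => f q - a * g q + b * h q) p = pu f p - a * pu g p + b * pu h p := by
  have H := ((hasDerivAt_pu hf p).sub ((hasDerivAt_pu hg p).const_mul a)).add
    ((hasDerivAt_pu hh p).const_mul b)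
  exact H.deriv

lemma pw_comb3 {f g h : ℝ × ℝ → ℝ} (hf : Differentiable ℝ f) (hg : Differentiable ℝ g)
    (hh : Differentiable ℝ h) (a b : ℝ) (p : ℝ × ℝ) :
    pw (fun q => f q - a * g q + b * h q) p = pw f p - a * pw g p + b * pw h p := by
  have H := ((hasDerivAt_pw hf p).sub ((hasDerivAt_pw hg p).const_mul a)).add
    ((hasDerivAt_pw hh p).const_mul b)
  exact H.deriv

lemma pu_comb2 {f g : ℝ × ℝ → ℝ} (hf : Differentiable ℝ f) (hg : Differentiable ℝ g)
    (a : ℝ) (p : ℝ × ℝ) :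
    pu (fun q => f q - a * g q) p = pu f p - a * pu g p := by
  have H := (hasDerivAt_pu hf p).sub ((hasDerivAt_pu hg p).const_mul a)
  exact H.deriv

lemma pw_comb2 {f g : ℝ × ℝ → ℝ} (hf : Differentiable ℝ f) (hg : Differentiable ℝ g)
    (a : ℝ) (p : ℝ × ℝ) :
    pw (fun q => f q - a * g q) p = pw f p - a * pw g p := by
  have H := (hasDerivAt_pw hf p).sub ((hasDerivAt_pw hg p).const_mul a)
  exact H.deriv

lemma pu_comp {f : ℝ × ℝ → ℝ} (hf : Differentiable ℝ f) (s : ℝ) (p : ℝ × ℝ) :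
    pu (fun p => f (p.1, p.2 - s * p.1)) p
      = pu f (p.1, p.2 - s * p.1) - s * pw f (p.1, p.2 - s * p.1) := by
  have h1 : HasDerivAt (fun t : ℝ => (t, p.2 - s * t)) ((1 : ℝ), -s) p.1 := by
    refine (hasDerivAt_id p.1).prodMk ?_
    simpa using (hasDerivAt_id p.1).const_mul s |>.const_sub p.2
  have h2 : HasDerivAt (fun t => f (t, p.2 - s * t))
      (fderiv ℝ f (p.1, p.2 - s * p.1) (1, -s)) p.1 := by
    exact
      ((hf (p.1, p.2 - s * p.1)).hasFDerivAt.comp_hasDerivAt p.1 h1)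
  have h3 : pu (fun p => f (p.1, p.2 - s * p.1)) p
      = fderiv ℝ f (p.1, p.2 - s * p.1) (1, -s) := h2.deriv
  rw [h3, pu_eq_fderiv hf, pw_eq_fderiv hf]
  have hv : ((1:ℝ), -s) = ((1:ℝ), (0:ℝ)) - s • ((0:ℝ), (1:ℝ)) := by
    simp [Prod.ext_iff]
  rw [hv, map_sub, map_smul, smul_eq_mul]

lemma pw_comp {f : ℝ × ℝ → ℝ} (hf : Differentiable ℝ f) (s : ℝ) (p : ℝ × ℝ) :
    pw (fun p => f (p.1, p.2 - s * p.1)) p = pw f (p.1, p.2 - s * p.1) := by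
  have h1 : HasDerivAt (fun t : ℝ => (p.1, t - s * p.1)) ((0 : ℝ), (1 : ℝ)) p.2 := by
    refine (hasDerivAt_const p.2 p.1).prodMk ?_
    simpa using (hasDerivAt_id p.2).sub_const (s * p.1)
  have h2 : HasDerivAt (fun t => f (p.1, t - s * p.1))
      (fderiv ℝ f (p.1, p.2 - s * p.1) (0, 1)) p.2 := by
    exact
      ((hf (p.1, p.2 - s * p.1)).hasFDerivAt.comp_hasDerivAt p.2 h1)
  rw [pw_eq_fderiv hf]
  exact h2.deriv

lemma key_pu_fun {f : ℝ × ℝ → ℝ} (hf : Differentiable ℝ f) (s : ℝ) :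
    pu (fun p => f (p.1, p.2 - s * p.1))
      = fun p => (fun q => pu f q - s * pw f q) (p.1, p.2 - s * p.1) :=
  funext fun p => pu_comp hf s p

lemma key_pw_fun {f : ℝ × ℝ → ℝ} (hf : Differentiable ℝ f) (s : ℝ) :
    pw (fun p => f (p.1, p.2 - s * p.1))
      = fun p => pw f (p.1, p.2 - s * p.1) :=
  funext fun p => pw_comp hf s p

lemma key_pupu {f : ℝ × ℝ → ℝ} (hf : ContDiff ℝ (⊤ : ℕ∞) f) (s : ℝ) (p : ℝ × ℝ) :
    pu (pu (fun p => f (p.1, p.2 - s * p.1))) p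
      = pu (pu f) (p.1, p.2 - s * p.1) - 2 * s * pw (pu f) (p.1, p.2 - s * p.1)
        + s ^ 2 * pw (pw f) (p.1, p.2 - s * p.1) := by
  have hfd := hf.differentiable (by simp)
  have hpu := (contDiff_pu hf).differentiable (by simp)
  have hpw := (contDiff_pw hf).differentiable (by simp)
  have hLd : Differentiable ℝ (fun q => pu f q - s * pw f q) := hpu.sub (hpw.const_mul s)
  rw [key_pu_fun hfd s, pu_comp hLd s p,
      pu_comb2 hpu hpw s _, pw_comb2 hpu hpw s _, pu_pw_symm hf]
  ring

lemma key_pwpu {f : ℝ × ℝ → ℝ} (hf : ContDiff ℝ (⊤ : ℕ∞) f) (s : ℝ) (p : ℝ × ℝ) :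
    pw (pu (fun p => f (p.1, p.2 - s * p.1))) p
      = pw (pu f) (p.1, p.2 - s * p.1) - s * pw (pw f) (p.1, p.2 - s * p.1) := by
  have hfd := hf.differentiable (by simp)
  have hpu := (contDiff_pu hf).differentiable (by simp)
  have hpw := (contDiff_pw hf).differentiable (by simp)
  have hLd : Differentiable ℝ (fun q => pu f q - s * pw f q) := hpu.sub (hpw.const_mul s)
  rw [key_pu_fun hfd s, pw_comp hLd s p, pw_comb2 hpu hpw s _]

lemma key_pwpw {f : ℝ × ℝ → ℝ} (hf : ContDiff ℝ (⊤ : ℕ∞) f) (s : ℝ) (p : ℝ × ℝ) :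
    pw (pw (fun p => f (p.1, p.2 - s * p.1))) p
      = pw (pw f) (p.1, p.2 - s * p.1) := by
  have hfd := hf.differentiable (by simp)
  have hpw := (contDiff_pw hf).differentiable (by simp)
  rw [key_pw_fun hfd s, pw_comp hpw s p]

/-- Form-invariance of the integrability conditions under the equivalence transformation
φ̃ = φ − sψ + s²η, ψ̃ = ψ − 2sη, η̃ = η (composed with (u,w) ↦ (u, w − su)). -/
theorem statement8
    (φ ψ η : ℝ × ℝ → ℝ)
    (hφ : ContDiff ℝ (⊤ : ℕ∞) φ) (hψ : ContDiff ℝ (⊤ : ℕ∞) ψ) (hη : ContDiff ℝ (⊤ : ℕ∞) η)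
    (hne : ∀ p : ℝ × ℝ, η p ≠ 0)
    (hIC : IntCond φ ψ η Set.univ) (s : ℝ) :
    IntCond
      (fun p => φ (p.1, p.2 - s * p.1) - s * ψ (p.1, p.2 - s * p.1)
        + s ^ 2 * η (p.1, p.2 - s * p.1))
      (fun p => ψ (p.1, p.2 - s * p.1) - 2 * s * η (p.1, p.2 - s * p.1))
      (fun p => η (p.1, p.2 - s * p.1)) Set.univ ∧
    (∀ p : ℝ × ℝ, η (p.1, p.2 - s * p.1) ≠ 0) := by
  refine ⟨?_, fun p => hne _⟩
  intro p _
  set G : ℝ × ℝ → ℝ := fun q => φ q - s * ψ q + s ^ 2 * η q with hGdef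
  set K : ℝ × ℝ → ℝ := fun q => ψ q - 2 * s * η q with hKdef
  have hG : ContDiff ℝ (⊤ : ℕ∞) G := (hφ.sub (contDiff_const.mul hψ)).add (contDiff_const.mul hη)
  have hK : ContDiff ℝ (⊤ : ℕ∞) K := hψ.sub (contDiff_const.mul hη)
  have dφ := hφ.differentiable (by simp)
  have dψ := hψ.differentiable (by simp)
  have dη := hη.differentiable (by simp)
  have dG := hG.differentiable (by simp)
  have dK := hK.differentiable (by simp)
  have dpuφ := (contDiff_pu hφ).differentiable (by simp)
  have dpwφ := (contDiff_pw hφ).differentiable (by simp)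
  have dpuψ := (contDiff_pu hψ).differentiable (by simp)
  have dpwψ := (contDiff_pw hψ).differentiable (by simp)
  have dpuη := (contDiff_pu hη).differentiable (by simp)
  have dpwη := (contDiff_pw hη).differentiable (by simp)
  have hGT : (fun p : ℝ × ℝ => φ (p.1, p.2 - s * p.1) - s * ψ (p.1, p.2 - s * p.1)
      + s ^ 2 * η (p.1, p.2 - s * p.1)) = fun p => G (p.1, p.2 - s * p.1) := by
    funext r; simp [hGdef]
  have hKT : (fun p : ℝ × ℝ => ψ (p.1, p.2 - s * p.1) - 2 * s * η (p.1, p.2 - s * p.1))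
      = fun p => K (p.1, p.2 - s * p.1) := by
    funext r; simp [hKdef]
  have eGu : pu G = fun r => pu φ r - s * pu ψ r + s ^ 2 * pu η r :=
    funext fun r => by rw [hGdef]; exact pu_comb3 dφ dψ dη s (s ^ 2) r
  have eGw : pw G = fun r => pw φ r - s * pw ψ r + s ^ 2 * pw η r :=
    funext fun r => by rw [hGdef]; exact pw_comb3 dφ dψ dη s (s ^ 2) r
  have eKu : pu K = fun r => pu ψ r - 2 * s * pu η r :=
    funext fun r => by rw [hKdef]; exact pu_comb2 dψ dη (2 * s) r
  have eKw : pw K = fun r => pw ψ r - 2 * s * pw η r :=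
    funext fun r => by rw [hKdef]; exact pw_comb2 dψ dη (2 * s) r
  set Q : ℝ × ℝ := (p.1, p.2 - s * p.1) with hQ
  have eGuu : pu (pu G) Q = pu (pu φ) Q - s * pu (pu ψ) Q + s ^ 2 * pu (pu η) Q := by
    rw [eGu]; exact pu_comb3 dpuφ dpuψ dpuη s (s ^ 2) Q
  have eGwu : pw (pu G) Q = pw (pu φ) Q - s * pw (pu ψ) Q + s ^ 2 * pw (pu η) Q := by
    rw [eGu]; exact pw_comb3 dpuφ dpuψ dpuη s (s ^ 2) Q
  have eGww : pw (pw G) Q = pw (pw φ) Q - s * pw (pw ψ) Q + s ^ 2 * pw (pw η) Q := by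
    rw [eGw]; exact pw_comb3 dpwφ dpwψ dpwη s (s ^ 2) Q
  have eKuu : pu (pu K) Q = pu (pu ψ) Q - 2 * s * pu (pu η) Q := by
    rw [eKu]; exact pu_comb2 dpuψ dpuη (2 * s) Q
  have eKwu : pw (pu K) Q = pw (pu ψ) Q - 2 * s * pw (pu η) Q := by
    rw [eKu]; exact pw_comb2 dpuψ dpuη (2 * s) Q
  have eKww : pw (pw K) Q = pw (pw ψ) Q - 2 * s * pw (pw η) Q := by
    rw [eKw]; exact pw_comb2 dpwψ dpwη (2 * s) Q
  have eGu' : pu G Q = pu φ Q - s * pu ψ Q + s ^ 2 * pu η Q := by rw [eGu]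
  have eGw' : pw G Q = pw φ Q - s * pw ψ Q + s ^ 2 * pw η Q := by rw [eGw]
  have eKu' : pu K Q = pu ψ Q - 2 * s * pu η Q := by rw [eKu]
  have eKw' : pw K Q = pw ψ Q - 2 * s * pw η Q := by rw [eKw]
  obtain ⟨h1, h2, h3, h4, h5, h6, h7, h8, h9⟩ := hIC Q (Set.mem_univ _)
  simp only [hGT, hKT]
  rw [show ((p.1, p.2 - s * p.1) : ℝ × ℝ) = Q from rfl] at *
  rw [key_pupu hG s p, key_pwpu hG s p, key_pwpw hG s p,
      key_pupu hK s p, key_pwpu hK s p, key_pwpw hK s p,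
      key_pupu hη s p, key_pwpu hη s p, key_pwpw hη s p,
      pu_comp dG s p, pw_comp dG s p, pu_comp dK s p, pw_comp dK s p,
      pu_comp dη s p, pw_comp dη s p]
  rw [eGu', eGw', eGuu, eGwu, eGww, eKu', eKw', eKuu, eKwu, eKww]
  refine ⟨?_, ?_, ?_, ?_, ?_, ?_, ?_, ?_, ?_⟩
  · linear_combination h1 - s*h4 + s^2*h7 - 2*s*h2 + 2*s^2*h5 - 2*s^3*h8 + s^2*h3 - s^3*h6 + s^4*h9
  · linear_combination h2 - s*h5 + s^2*h8 - s*h3 + s^2*h6 - s^3*h9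
  · linear_combination h3 - s*h6 + s^2*h9
  · linear_combination h4 - 2*s*h7 - 2*s*h5 + 4*s^2*h8 + s^2*h6 - 2*s^3*h9
  · linear_combination h5 - 2*s*h8 - s*h6 + 2*s^2*h9
  · linear_combination h6 - 2*s*h9
  · linear_combination h7 - 2*s*h8 + s^2*h9
  · linear_combination h8 - s*h9
  · linear_combination h9
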